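/- Let M be a nonempty compact metric space and f : M → M continuous. The map μ̃ ↦ π_* μ̃ is a bijection from the set of f̃-invariant Borel probability measures on the inverse limit space M^f onto the set of f-invariant Borel probability measures on M. -/

import Mathlib

open MeasureTheory

/-- The inverse limit space of a map `f : M → M`. -/
def InvLimit {M : Type*} (f : M → M) : Set (ℤ → M) :=
  {x | ∀ n : ℤ, f (x n) = x (n + 1)}

/-- The shift map `f̃` on the inverse limit space. -/
def shiftMap {M : Type*} (f : M → M) (x : InvLimit f) : InvLimit f :=
  ⟨fun n => x.1 (n + 1), fun n => x.2 (n + 1)⟩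

/-- The natural projection `π : M^f → M`, `π x̃ = x̃ 0`. -/
def invProj {M : Type*} (f : M → M) (x : InvLimit f) : M := x.1 0

/-!
A shift-invariant `μ̃` gives `{x̃ | x̃ (-n) ∈ B}` the mass of its `f̃ⁿ`-preimage `{x̃ | x̃ 0 ∈ B}`,
namely `(π_* μ̃) B`; these sets form a generating π-system, so `π_*` is injective on invariant
measures.

Conversely, an invariant `μ` lifts through the content `λ K = lim_n μ (π_{-n} K)` on compact
subsets of `M^f`: the sequence is antitone by invariance, disjoint compacts have eventually
disjoint coordinate images, and outer regularity of `μ` makes `λ` regular. Since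
`π_{-n} (f̃⁻¹ K) = π_{-n-1} K`, the resulting measure is `f̃`-invariant, and it projects to `μ`
because `μ`-almost every point lies in `⋂ₖ fᵏ M`, i.e. has a full backward orbit.
-/

open Set Filter Topology Function

lemma MeasureTheory.Measure.ext_of_isClosed {X : Type*} [TopologicalSpace X] [MeasurableSpace X]
    [BorelSpace X] {μ ν : Measure X} [IsFiniteMeasure μ]
    (h : ∀ s, IsClosed s → μ s = ν s) : μ = ν :=
  ext_of_generate_finite _ (BorelSpace.measurable_eq.trans borel_eq_generateFrom_isClosed)
    isPiSystem_isClosed h (h univ isClosed_univ)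

namespace InvLimit

variable {M : Type*} (f : M → M)

def coord (k : ℤ) (x : InvLimit f) : M := x.1 k

lemma coord_add_one (k : ℤ) (x : InvLimit f) : coord f (k + 1) x = f (coord f k x) :=
  (x.2 k).symm

lemma coord_neg_eq_apply_coord_neg_succ (n : ℕ) (x : InvLimit f) :
    coord f (-n) x = f (coord f (-(n + 1 : ℕ)) x) := by
  rw [← coord_add_one f]
  congr 1
  push_cast
  ring

lemma coord_add_natCast (m : ℤ) (j : ℕ) (x : InvLimit f) :
    coord f (m + j) x = f^[j] (coord f m x) := by
  induction j with
  | zero => simp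
  | succ j ih => rw [Nat.cast_succ, ← add_assoc, coord_add_one, ih, iterate_succ_apply']

lemma coord_eq_iterate_coord_neg (k : ℤ) (x : InvLimit f) :
    coord f k x = f^[(k + k.natAbs).toNat] (coord f (-k.natAbs) x) := by
  rw [← coord_add_natCast]
  congr 1
  omega

lemma ext_coord_neg {x y : InvLimit f} (h : ∀ n : ℕ, coord f (-n) x = coord f (-n) y) :
    x = y := by
  apply Subtype.ext
  funext k
  show coord f k x = coord f k y
  rw [coord_eq_iterate_coord_neg f k x, coord_eq_iterate_coord_neg f k y, h]

lemma invProj_eq_coord_zero : invProj f = coord f 0 := rfl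

lemma coord_shiftMap (k : ℤ) (x : InvLimit f) : coord f k (shiftMap f x) = coord f (k + 1) x :=
  rfl

lemma coord_iterate_shiftMap (k : ℤ) (n : ℕ) (x : InvLimit f) :
    coord f k ((shiftMap f)^[n] x) = coord f (k + n) x := by
  induction n generalizing k with
  | zero => simp
  | succ n ih =>
    rw [iterate_succ_apply', coord_shiftMap, ih, Nat.cast_succ, add_comm (n : ℤ), add_assoc]

lemma semiconj_invProj_shiftMap : Semiconj (invProj f) (shiftMap f) f :=
  fun x => (x.2 0).symm

lemma shiftMap_surjective : Surjective (shiftMap f) := fun x =>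
  ⟨⟨fun n => x.1 (n - 1), fun n => by simpa using x.2 (n - 1)⟩, by
    ext n
    simp [shiftMap]⟩

lemma range_coord_neg (n : ℕ) : range (coord f (-n)) = range (invProj f) := by
  rw [← (shiftMap_surjective f).iterate n |>.range_comp]
  congr 1
  funext x
  simp [comp_apply, coord_iterate_shiftMap, invProj_eq_coord_zero]

lemma coord_neg_image_succ (n : ℕ) (K : Set (InvLimit f)) :
    coord f (-n) '' K = f '' (coord f (-(n + 1 : ℕ)) '' K) := by
  rw [image_image]
  exact image_congr fun x _ => coord_neg_eq_apply_coord_neg_succ f n x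

lemma coord_neg_image_preimage_shiftMap (n : ℕ) (K : Set (InvLimit f)) :
    coord f (-n) '' (shiftMap f ⁻¹' K) = coord f (-(n + 1 : ℕ)) '' K := by
  have : coord f (-n) = coord f (-(n + 1 : ℕ)) ∘ shiftMap f := funext fun x => by
    rw [comp_apply, coord_shiftMap]
    congr 1
    push_cast
    ring
  rw [this, image_comp, image_preimage_eq K (shiftMap_surjective f)]

lemma coord_neg_image_preimage_invProj (n : ℕ) (C : Set M) :
    coord f (-n) '' (invProj f ⁻¹' C) = f^[n] ⁻¹' C ∩ range (invProj f) := by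
  refine Subset.antisymm ?_ ?_
  · rintro _ ⟨x, hx, rfl⟩
    refine ⟨?_, range_coord_neg f n ▸ mem_range_self x⟩
    rwa [mem_preimage, ← coord_add_natCast, neg_add_cancel]
  · rintro _ ⟨hC, x, rfl⟩
    refine ⟨(shiftMap f)^[n] x, ?_, ?_⟩
    · rwa [mem_preimage, invProj_eq_coord_zero, coord_iterate_shiftMap, zero_add,
        ← zero_add (n : ℤ), coord_add_natCast]
    · rw [coord_iterate_shiftMap, neg_add_cancel, invProj_eq_coord_zero]

section Topology

variable [TopologicalSpace M]

@[fun_prop]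
lemma continuous_coord (k : ℤ) : Continuous (coord f k) :=
  (continuous_apply k).comp continuous_subtype_val

lemma continuous_shiftMap : Continuous (shiftMap f) :=
  (continuous_pi fun k => continuous_coord f (k + 1)).subtype_mk _

lemma continuous_invProj : Continuous (invProj f) :=
  continuous_coord f 0

lemma isClosed [T2Space M] (hf : Continuous f) : IsClosed (InvLimit f) := by
  simp only [InvLimit, ofPred_forall]
  exact isClosed_iInter fun n => isClosed_eq (hf.comp (continuous_apply n)) (continuous_apply _)

lemma compactSpace [T2Space M] [CompactSpace M] (hf : Continuous f) : CompactSpace (InvLimit f) :=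
  isCompact_iff_compactSpace.mp (isClosed f hf).isCompact

/-- By compactness, the backward orbits of `y` of finite length `j` accumulate on a full one. -/
lemma range_invProj [T2Space M] [CompactSpace M] (hf : Continuous f) :
    range (invProj f) = ⋂ k : ℕ, range f^[k] := by
  refine Subset.antisymm ?_ fun y hy => ?_
  · rintro _ ⟨x, rfl⟩
    refine mem_iInter.mpr fun k => ⟨coord f (-k) x, ?_⟩
    rw [← coord_add_natCast, neg_add_cancel]
    rfl
  let A : ℕ → Set (ℤ → M) := fun j => {x | x 0 = y ∧ ∀ i : ℕ, f (x (i - j)) = x (i - j + 1)}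
  have hA_closed (j : ℕ) : IsClosed (A j) := by
    simp only [A, ofPred_and, ofPred_forall]
    exact (isClosed_eq (continuous_apply 0) continuous_const).inter <|
      isClosed_iInter fun i => isClosed_eq (hf.comp (continuous_apply _)) (continuous_apply _)
  have hA_anti (j : ℕ) : A (j + 1) ⊆ A j := fun x ⟨hx0, hx⟩ => ⟨hx0, fun i => by
    convert hx (i + 1) using 3 <;> push_cast <;> ring⟩
  have hA_nonempty (j : ℕ) : (A j).Nonempty := by
    obtain ⟨z, hz⟩ := mem_iInter.mp hy j
    refine ⟨fun i => f^[(i + j).toNat] z, by simpa using hz, fun i => ?_⟩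
    rw [← iterate_succ_apply' f]
    congr 2; omega
  obtain ⟨x, hx⟩ := IsCompact.nonempty_iInter_of_sequence_nonempty_isCompact_isClosed A hA_anti
    hA_nonempty (hA_closed 0).isCompact hA_closed
  refine ⟨⟨x, fun k => ?_⟩, (mem_iInter.mp hx 0).1⟩
  have := (mem_iInter.mp hx k.natAbs).2 (k + k.natAbs).toNat
  rwa [show ((k + k.natAbs).toNat : ℤ) - k.natAbs = k by omega] at this

variable {f} in
lemma eventually_disjoint_coord_neg_image [T2Space M] {K₁ K₂ : Set (InvLimit f)}
    (h₁ : IsCompact K₁) (h₂ : IsCompact K₂) (hd : Disjoint K₁ K₂) :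
    ∀ᶠ n : ℕ in atTop, Disjoint (coord f (-n) '' K₁) (coord f (-n) '' K₂) := by
  let t : ℕ → Set (InvLimit f × InvLimit f) := fun n => {p | coord f (-n) p.1 = coord f (-n) p.2}
  have ht_closed (n : ℕ) : IsClosed (t n) := isClosed_eq (by fun_prop) (by fun_prop)
  have ht_anti : Antitone t := antitone_nat_of_succ_le fun n p (hp : _ = _) => by
    simp only [t, mem_ofPred_eq, coord_neg_eq_apply_coord_neg_succ f n, hp]
  have h_empty : (K₁ ×ˢ K₂) ∩ ⋂ n, t n = ∅ := by
    refine eq_empty_iff_forall_notMem.mpr fun p ⟨⟨hp₁, hp₂⟩, hp⟩ => ?_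
    have : p.1 = p.2 := ext_coord_neg f (mem_iInter.mp hp)
    exact disjoint_left.mp hd hp₁ (this ▸ hp₂)
  obtain ⟨N, hN⟩ := (h₁.prod h₂).elim_directed_family_closed t ht_closed h_empty
    ht_anti.directed_ge
  filter_upwards [eventually_ge_atTop N] with n hn
  refine disjoint_left.mpr ?_
  rintro _ ⟨x, hx, rfl⟩ ⟨y, hy, hxy⟩
  exact eq_empty_iff_forall_notMem.mp hN (x, y) ⟨⟨hx, hy⟩, ht_anti hn hxy.symm⟩

end Topology


section Measure

variable [mM : MeasurableSpace M]

@[fun_prop]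
lemma measurable_coord (k : ℤ) : Measurable (coord f k) :=
  (measurable_pi_apply k).comp measurable_subtype_coe

lemma measurable_shiftMap : Measurable (shiftMap f) :=
  (measurable_pi_lambda _ fun k => measurable_coord f (k + 1)).subtype_mk

lemma measurable_invProj : Measurable (invProj f) :=
  measurable_coord f 0

lemma monotone_comap_coord_neg (hf : Measurable f) :
    Monotone fun n : ℕ => mM.comap (coord f (-n)) := by
  refine monotone_nat_of_le_succ fun n => ?_
  rw [show coord f (-n) = f ∘ coord f (-(n + 1 : ℕ)) from
    funext (coord_neg_eq_apply_coord_neg_succ f n), ← MeasurableSpace.comap_comp]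
  exact MeasurableSpace.comap_mono hf.comap_le

lemma iSup_comap_coord_neg (hf : Measurable f) :
    ⨆ n : ℕ, mM.comap (coord f (-n)) = Subtype.instMeasurableSpace := by
  refine le_antisymm (iSup_le fun n => (measurable_coord f _).comap_le) ?_
  simp only [Subtype.instMeasurableSpace, MeasurableSpace.pi, MeasurableSpace.comap_iSup,
    MeasurableSpace.comap_comp]
  refine iSup_le fun k => ?_
  have : (fun x : ℤ → M => x k) ∘ Subtype.val =
      f^[(k + k.natAbs).toNat] ∘ coord f (-k.natAbs) :=
    funext (coord_eq_iterate_coord_neg f k)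
  rw [this, ← MeasurableSpace.comap_comp]
  exact le_iSup_of_le k.natAbs (MeasurableSpace.comap_mono (hf.iterate _).comap_le)

variable {f}

lemma measure_preimage_coord_neg {μ : Measure (InvLimit f)}
    (hμ : MeasurePreserving (shiftMap f) μ μ) {B : Set M} (hB : MeasurableSet B) (n : ℕ) :
    μ (coord f (-n) ⁻¹' B) = μ.map (invProj f) B := by
  rw [Measure.map_apply (measurable_invProj f) hB, ← (hμ.iterate n).measure_preimage
    ((measurable_coord f _ hB).nullMeasurableSet), ← preimage_comp]
  congr 2
  funext x
  simp [coord_iterate_shiftMap, invProj_eq_coord_zero]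

/-- The sets depending on a single coordinate `-n` form a π-system generating the σ-algebra,
and a shift-invariant measure is determined on them by its projection. -/
lemma eq_of_map_invProj_eq (hf : Measurable f) {μ ν : Measure (InvLimit f)} [IsFiniteMeasure μ]
    (hμ : MeasurePreserving (shiftMap f) μ μ) (hν : MeasurePreserving (shiftMap f) ν ν)
    (h : μ.map (invProj f) = ν.map (invProj f)) : μ = ν := by
  refine ext_of_generate_finite (⋃ n : ℕ, {s | MeasurableSet[mM.comap (coord f (-n))] s})
    ?_ ?_ ?_ ?_
  · exact ((MeasurableSpace.generateFrom_iUnion_measurableSet _).trans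
      (iSup_comap_coord_neg f hf)).symm
  · exact isPiSystem_iUnion_of_monotone _
      (fun n => @MeasurableSpace.isPiSystem_measurableSet _ (mM.comap (coord f (-n))))
      fun n m hnm s hs => monotone_comap_coord_neg f hf hnm s hs
  · simp only [mem_iUnion]
    rintro _ ⟨n, B, hB, rfl⟩
    rw [measure_preimage_coord_neg hμ hB, measure_preimage_coord_neg hν hB, h]
  · simpa [Measure.map_apply (measurable_invProj f) MeasurableSet.univ] using
      congrArg (fun m => m univ) h

lemma measurePreserving_map_invProj (hf : Measurable f) {μ : Measure (InvLimit f)}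
    (hμ : MeasurePreserving (shiftMap f) μ μ) :
    MeasurePreserving f (μ.map (invProj f)) (μ.map (invProj f)) :=
  (measurable_invProj f).measurePreserving μ |>.of_semiconj hμ
    (semiconj_invProj_shiftMap f) hf

end Measure

variable {f}

section Lift

open scoped ENNReal

variable [MeasurableSpace M] {μ : Measure M}

variable (f μ) in
/-- `λ K = lim_n μ (π_{-n} K)`, written as an infimum: the sequence is antitone when `μ` is
invariant (`antitone_measure_coord_neg_image`). -/
noncomputable def liftFun (K : Set (InvLimit f)) : ℝ≥0∞ :=
  ⨅ n : ℕ, μ (coord f (-n) '' K)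

lemma liftFun_le (K : Set (InvLimit f)) (n : ℕ) : liftFun f μ K ≤ μ (coord f (-n) '' K) :=
  iInf_le _ n

lemma liftFun_mono {K L : Set (InvLimit f)} (h : K ⊆ L) : liftFun f μ K ≤ liftFun f μ L :=
  iInf_mono fun _ => measure_mono (image_mono h)

lemma liftFun_ne_top [IsFiniteMeasure μ] (K : Set (InvLimit f)) : liftFun f μ K ≠ ∞ :=
  ((liftFun_le K 0).trans_lt (measure_lt_top μ _)).ne

variable [TopologicalSpace M] [T2Space M] [OpensMeasurableSpace M]

lemma antitone_measure_coord_neg_image (hμ : MeasurePreserving f μ μ) {K : Set (InvLimit f)}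
    (hK : IsCompact K) : Antitone fun n : ℕ => μ (coord f (-n) '' K) := by
  refine antitone_nat_of_succ_le fun n => ?_
  rw [coord_neg_image_succ f n K]
  calc μ (coord f (-(n + 1 : ℕ)) '' K)
      ≤ μ (f ⁻¹' (f '' (coord f (-(n + 1 : ℕ)) '' K))) := measure_mono (subset_preimage_image _ _)
    _ = μ (f '' (coord f (-(n + 1 : ℕ)) '' K)) := by
      rw [← coord_neg_image_succ f]
      exact hμ.measure_preimage
        (hK.image (continuous_coord f _)).isClosed.measurableSet.nullMeasurableSet

lemma tendsto_liftFun (hμ : MeasurePreserving f μ μ) {K : Set (InvLimit f)} (hK : IsCompact K) :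
    Tendsto (fun n : ℕ => μ (coord f (-n) '' K)) atTop (𝓝 (liftFun f μ K)) :=
  tendsto_atTop_iInf (antitone_measure_coord_neg_image hμ hK)

lemma liftFun_preimage_shiftMap (hμ : MeasurePreserving f μ μ) {K : Set (InvLimit f)}
    (hK : IsCompact K) : liftFun f μ (shiftMap f ⁻¹' K) = liftFun f μ K := by
  simp only [liftFun, coord_neg_image_preimage_shiftMap]
  exact (antitone_measure_coord_neg_image hμ hK).iInf_nat_add 1

lemma measure_compl_range_invProj [CompactSpace M] (hf : Continuous f)
    (hμ : MeasurePreserving f μ μ) : μ (range (invProj f))ᶜ = 0 := by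
  rw [range_invProj f hf, compl_iInter]
  refine measure_iUnion_null fun k => ?_
  have hk := (isCompact_range (hf.iterate k)).isClosed.measurableSet.compl
  rw [← (hμ.iterate k).measure_preimage hk.nullMeasurableSet, preimage_compl,
    preimage_range, compl_univ, measure_empty]

lemma liftFun_preimage_invProj [CompactSpace M] (hf : Continuous f)
    (hμ : MeasurePreserving f μ μ) {C : Set M} (hC : MeasurableSet C) :
    liftFun f μ (invProj f ⁻¹' C) = μ C := by
  simp only [liftFun, coord_neg_image_preimage_invProj,
    measure_inter_conull (measure_compl_range_invProj hf hμ)]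
  simp [(hμ.iterate _).measure_preimage hC.nullMeasurableSet]

lemma liftFun_union_le (hμ : MeasurePreserving f μ μ) {K₁ K₂ : Set (InvLimit f)}
    (h₁ : IsCompact K₁) (h₂ : IsCompact K₂) :
    liftFun f μ (K₁ ∪ K₂) ≤ liftFun f μ K₁ + liftFun f μ K₂ :=
  le_of_tendsto_of_tendsto' (tendsto_liftFun hμ (h₁.union h₂))
    ((tendsto_liftFun hμ h₁).add (tendsto_liftFun hμ h₂)) fun n => by
      rw [image_union]
      exact measure_union_le _ _

lemma liftFun_union (hμ : MeasurePreserving f μ μ) {K₁ K₂ : Set (InvLimit f)}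
    (h₁ : IsCompact K₁) (h₂ : IsCompact K₂) (hd : Disjoint K₁ K₂) :
    liftFun f μ (K₁ ∪ K₂) = liftFun f μ K₁ + liftFun f μ K₂ := by
  refine tendsto_nhds_unique (tendsto_liftFun hμ (h₁.union h₂)) <|
    ((tendsto_liftFun hμ h₁).add (tendsto_liftFun hμ h₂)).congr' ?_
  filter_upwards [eventually_disjoint_coord_neg_image h₁ h₂ hd] with n hn
  rw [image_union, measure_union hn (h₂.image (continuous_coord f _)).isClosed.measurableSet]

variable (μ) in
noncomputable def liftContent [IsFiniteMeasure μ] (hμ : MeasurePreserving f μ μ) :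
    Content (InvLimit f) where
  toFun K := (liftFun f μ K).toNNReal
  mono' _ _ h := ENNReal.toNNReal_mono (liftFun_ne_top _) (liftFun_mono h)
  sup_disjoint' K L hd _ _ := by
    rw [← ENNReal.toNNReal_add (liftFun_ne_top _) (liftFun_ne_top _)]
    exact congrArg _ (liftFun_union hμ K.2 L.2 hd)
  sup_le' K L := by
    rw [← ENNReal.toNNReal_add (liftFun_ne_top _) (liftFun_ne_top _)]
    exact ENNReal.toNNReal_mono (ENNReal.add_ne_top.mpr ⟨liftFun_ne_top _, liftFun_ne_top _⟩)
      (liftFun_union_le hμ K.2 L.2)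

lemma liftContent_apply [IsFiniteMeasure μ] (hμ : MeasurePreserving f μ μ)
    (K : TopologicalSpace.Compacts (InvLimit f)) : liftContent μ hμ K = liftFun f μ K :=
  ENNReal.coe_toNNReal (liftFun_ne_top _)

lemma contentRegular_liftContent [CompactSpace M] [IsFiniteMeasure μ] [μ.OuterRegular]
    (hf : Continuous f) (hμ : MeasurePreserving f μ μ) : (liftContent μ hμ).ContentRegular := by
  have := compactSpace f hf
  intro K
  simp only [liftContent_apply]
  refine le_antisymm (le_iInf₂ fun K' hK' => liftFun_mono (hK'.trans interior_subset)) ?_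
  refine le_of_forall_gt fun r hr => ?_
  obtain ⟨n, hn⟩ := iInf_lt_iff.mp hr
  obtain ⟨U, hSU, hU, hμU⟩ := (coord f (-n) '' K).exists_isOpen_lt_of_lt r hn
  obtain ⟨L, hL, hSL, hLU⟩ :=
    exists_compact_between (K.isCompact.image (continuous_coord f _)) hU hSU
  let K' : TopologicalSpace.Compacts (InvLimit f) :=
    ⟨coord f (-n) ⁻¹' L, (hL.isClosed.preimage (continuous_coord f _)).isCompact⟩
  have hKK' : (K : Set (InvLimit f)) ⊆ interior K' := fun x hx =>
    preimage_interior_subset_interior_preimage (continuous_coord f _) (hSL (mem_image_of_mem _ hx))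
  calc _ ≤ liftFun f μ K' := iInf₂_le K' hKK'
    _ ≤ μ (coord f (-n) '' K') := liftFun_le _ n
    _ ≤ μ U := measure_mono ((image_preimage_subset _ _).trans hLU)
    _ < r := hμU

end Lift

section LiftMeasure

variable [TopologicalSpace M] [T2Space M] [SecondCountableTopology M] [MeasurableSpace M]
  [BorelSpace M] {μ : Measure M}

variable (μ) in
noncomputable def liftMeasure [IsFiniteMeasure μ] (hμ : MeasurePreserving f μ μ) :
    Measure (InvLimit f) :=
  (liftContent μ hμ).measure

lemma liftMeasure_apply_of_isCompact [CompactSpace M] [IsFiniteMeasure μ] [μ.OuterRegular]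
    (hf : Continuous f) (hμ : MeasurePreserving f μ μ) {K : Set (InvLimit f)} (hK : IsCompact K) :
    liftMeasure μ hμ K = liftFun f μ K :=
  ((liftContent μ hμ).measure_eq_content_of_regular (contentRegular_liftContent hf hμ)
    ⟨K, hK⟩).trans (liftContent_apply hμ _)

lemma isFiniteMeasure_liftMeasure [CompactSpace M] [IsFiniteMeasure μ] [μ.OuterRegular]
    (hf : Continuous f) (hμ : MeasurePreserving f μ μ) : IsFiniteMeasure (liftMeasure μ hμ) := by
  have := compactSpace f hf
  exact ⟨(liftMeasure_apply_of_isCompact hf hμ isCompact_univ).trans_lt (liftFun_ne_top _).lt_top⟩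

lemma map_invProj_liftMeasure [CompactSpace M] [IsFiniteMeasure μ] [μ.OuterRegular]
    (hf : Continuous f) (hμ : MeasurePreserving f μ μ) :
    (liftMeasure μ hμ).map (invProj f) = μ := by
  have := compactSpace f hf
  refine (Measure.ext_of_isClosed fun C hC => ?_).symm
  rw [Measure.map_apply (measurable_invProj f) hC.measurableSet,
    liftMeasure_apply_of_isCompact hf hμ (hC.preimage (continuous_invProj f)).isCompact,
    liftFun_preimage_invProj hf hμ hC.measurableSet]

lemma measurePreserving_shiftMap_liftMeasure [CompactSpace M] [IsFiniteMeasure μ]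
    [μ.OuterRegular] (hf : Continuous f) (hμ : MeasurePreserving f μ μ) :
    MeasurePreserving (shiftMap f) (liftMeasure μ hμ) (liftMeasure μ hμ) := by
  have := compactSpace f hf
  have := isFiniteMeasure_liftMeasure hf hμ
  refine ⟨measurable_shiftMap f, Measure.ext_of_isClosed fun C hC => ?_⟩
  rw [Measure.map_apply (measurable_shiftMap f) hC.measurableSet,
    liftMeasure_apply_of_isCompact hf hμ (hC.preimage (continuous_shiftMap f)).isCompact,
    liftMeasure_apply_of_isCompact hf hμ hC.isCompact, liftFun_preimage_shiftMap hμ hC.isCompact]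

end LiftMeasure

end InvLimit

open InvLimit in
theorem pushforward_bijOn_invariant_measures_general
    {M : Type*} [MetricSpace M] [CompactSpace M]
    [MeasurableSpace M] [BorelSpace M]
    (f : M → M) (hf : Continuous f) :
    Set.BijOn (fun μt : Measure ↥(InvLimit f) => μt.map (invProj f))
      {μt : Measure ↥(InvLimit f) |
        IsProbabilityMeasure μt ∧ μt.map (shiftMap f) = μt}
      {μ : Measure M | IsProbabilityMeasure μ ∧ μ.map f = μ} := by
  refine ⟨?mapsTo, ?injOn, ?surjOn⟩
  · rintro μt ⟨_, hμt⟩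
    exact ⟨Measure.isProbabilityMeasure_map (measurable_invProj f).aemeasurable,
      (measurePreserving_map_invProj hf.measurable ⟨measurable_shiftMap f, hμt⟩).map_eq⟩
  · rintro μ ⟨_, hμ⟩ ν ⟨_, hν⟩ h
    exact eq_of_map_invProj_eq hf.measurable ⟨measurable_shiftMap f, hμ⟩
      ⟨measurable_shiftMap f, hν⟩ h
  · rintro μ ⟨_, hμ⟩
    have hμ' : MeasurePreserving f μ μ := ⟨hf.measurable, hμ⟩
    have h_proj := map_invProj_liftMeasure hf hμ'
    have : IsProbabilityMeasure ((liftMeasure μ hμ').map (invProj f)) := by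
      rw [h_proj]
      infer_instance
    exact ⟨liftMeasure μ hμ', ⟨Measure.isProbabilityMeasure_of_map (invProj f),
      (measurePreserving_shiftMap_liftMeasure hf hμ').map_eq⟩, h_proj⟩

theorem pushforward_bijOn_invariant_measures
    {M : Type*} [MetricSpace M] [CompactSpace M] [Nonempty M]
    [MeasurableSpace M] [BorelSpace M]
    (f : M → M) (hf : Continuous f) :
    Set.BijOn (fun μt : Measure ↥(InvLimit f) => μt.map (invProj f))
      {μt : Measure ↥(InvLimit f) |
        IsProbabilityMeasure μt ∧ μt.map (shiftMap f) = μt}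
      {μ : Measure M | IsProbabilityMeasure μ ∧ μ.map f = μ} :=
  pushforward_bijOn_invariant_measures_general f hf
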